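/- Let k < p be positive integers and let Q be a p×k real matrix with QᵀQ = I_k whose top k×k block Q₁ satisfies that I_k + Q₁ is invertible. Define F = (I_k − Q₁)(I_k + Q₁)⁻¹, B = ½(Fᵀ − F), A = ½ Q₂ (I_k + F) where Q₂ is the bottom (p−k)×k block of Q, and X = [[B, −Aᵀ],[A, 0]]. Then B is skew-symmetric, X is skew-symmetric, and C(X) = Q. Hence every Q in the Stiefel manifold with I_k + Q₁ invertible lies in the image of the Cayley parametrization. -/

import Mathlib

open Matrix MeasureTheory Filter
open scoped Kronecker ENNReal

noncomputable section

/-- The `p × k` matrix whose top `k × k` block is the identity and whose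
remaining entries are zero. -/
def Ipk (p k : ℕ) : Matrix (Fin p) (Fin k) ℝ :=
  Matrix.of fun i j => if (i : ℕ) = (j : ℕ) then 1 else 0

/-- The (modified) Cayley transform `C(X) = (I + X)(I - X)⁻¹ I_{p×k}`. -/
def cayley (p k : ℕ) (X : Matrix (Fin p) (Fin p) ℝ) : Matrix (Fin p) (Fin k) ℝ :=
  (1 + X) * (1 - X)⁻¹ * Ipk p k

/-- Top `k × k` block of a `p × k` matrix. -/
def topBlock {p k : ℕ} (h : k ≤ p) (Q : Matrix (Fin p) (Fin k) ℝ) :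
    Matrix (Fin k) (Fin k) ℝ :=
  Q.submatrix (Fin.castLE h) id

/-- Bottom `(p-k) × k` block of a `p × k` matrix. -/
def botBlock {p k : ℕ} (h : k ≤ p) (Q : Matrix (Fin p) (Fin k) ℝ) :
    Matrix (Fin (p - k)) (Fin k) ℝ :=
  Q.submatrix (fun i => ⟨k + i.1, by have := i.isLt; omega⟩) id

/-- The skew-symmetric block matrix `[[B, -Aᵀ], [A, 0]]` as a `p × p` matrix. -/
def blockX {p k : ℕ} (h : k ≤ p) (B : Matrix (Fin k) (Fin k) ℝ)
    (A : Matrix (Fin (p - k)) (Fin k) ℝ) : Matrix (Fin p) (Fin p) ℝ :=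
  (Matrix.fromBlocks B (-Aᵀ) A 0).submatrix
    (fun i => finSumFinEquiv.symm (Fin.cast (by omega) i))
    (fun j => finSumFinEquiv.symm (Fin.cast (by omega) j))

/-- Position of the strictly subdiagonal entry `(i, j)` (`j < i`) of a `k × k`
matrix in the column-major enumeration of the strictly subdiagonal entries. -/
def lowIdx (k i j : ℕ) : ℕ := j * k + i - (j + 1) * (j + 2) / 2

/-- The `k × k` skew-symmetric matrix whose strictly subdiagonal entries, in
column-major order, are given by `b`. -/
def skewOfVec (k : ℕ) (b : Fin (k * (k - 1) / 2) → ℝ) : Matrix (Fin k) (Fin k) ℝ :=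
  Matrix.of fun i j =>
    if (j : ℕ) < (i : ℕ) then
      if h : lowIdx k i j < k * (k - 1) / 2 then b ⟨lowIdx k i j, h⟩ else 0
    else if (i : ℕ) < (j : ℕ) then
      if h : lowIdx k j i < k * (k - 1) / 2 then -b ⟨lowIdx k j i, h⟩ else 0
    else 0

/-- The vector of strictly subdiagonal entries of a `k × k` matrix, in
column-major order. -/
def subdiagVec {k : ℕ} (M : Matrix (Fin k) (Fin k) ℝ) : Fin (k * (k - 1) / 2) → ℝ :=
  fun t => ∑ i : Fin k, ∑ j : Fin k,
    if (j : ℕ) < (i : ℕ) ∧ lowIdx k (i : ℕ) (j : ℕ) = (t : ℕ) then M i j else 0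

/-- Column-major vectorization of an `a × b` matrix, indexed by
(column, row) pairs. -/
def vecP {a b : ℕ} (M : Matrix (Fin a) (Fin b) ℝ) : Fin b × Fin a → ℝ :=
  fun q => M q.2 q.1

/-- The max-norm of a matrix: the maximum of the absolute values of its
entries. -/
def maxNorm {a b : ℕ} (M : Matrix (Fin a) (Fin b) ℝ) : ℝ :=
  ⨆ q : Fin a × Fin b, |M q.1 q.2|

/-- The Frobenius norm of a matrix. -/
def frobNorm {a b : ℕ} (M : Matrix (Fin a) (Fin b) ℝ) : ℝ :=
  Real.sqrt (∑ i, ∑ j, (M i j) ^ 2)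

/-!
Put `F = (I - Q₁)(I + Q₁)⁻¹`, so that `F (I + Q₁) = I - Q₁`. A real skew-symmetric `X` has
`I - X` invertible, since `(I - X)(I + X) = I + XᵀX` is positive definite, and `(I - X)⁻¹`
commutes with `I + X`; hence `C(X) = Q` reduces to the linear identity
`(I + X) I_{p×k} = (I - X) Q`. In blocks its rows read `I + B = (I - B) Q₁ + Aᵀ Q₂` and
`A (I + Q₁) = Q₂`, and both follow from `(I + F)(I + Q₁) = 2I`, `(I - F)(I + Q₁) = 2Q₁` and
`Q₁ᵀ Q₁ + Q₂ᵀ Q₂ = I`.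
-/

namespace Matrix

section

variable {n : Type*} [Fintype n] [DecidableEq n]

open scoped ComplexOrder in
theorem isUnit_det_one_sub_of_conjTranspose_eq_neg {𝕜 : Type*} [RCLike 𝕜] {X : Matrix n n 𝕜}
    (hX : Xᴴ = -X) : IsUnit (1 - X).det := by
  have hprod : (1 - X) * (1 + X) = 1 + Xᴴ * X := by rw [hX]; noncomm_ring
  have hpos : (1 + Xᴴ * X).PosDef :=
    PosDef.one.add_posSemidef (posSemidef_conjTranspose_mul_self X)
  refine isUnit_of_mul_isUnit_left (y := (1 + X).det) ?_
  rw [← det_mul, hprod]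
  exact hpos.det_pos.ne'.isUnit

theorem isUnit_det_one_sub_of_transpose_eq_neg {X : Matrix n n ℝ} (hX : Xᵀ = -X) :
    IsUnit (1 - X).det :=
  isUnit_det_one_sub_of_conjTranspose_eq_neg (by rwa [conjTranspose_eq_transpose_of_trivial])

theorem one_add_mul_nonsing_inv_one_sub_mul_eq {l R : Type*} [CommRing R] {X : Matrix n n R}
    {E Q : Matrix n l R} (hX : IsUnit (1 - X).det) (h : (1 + X) * E = (1 - X) * Q) :
    (1 + X) * (1 - X)⁻¹ * E = Q := by
  have hcomm : (1 + X) * (1 - X)⁻¹ = (1 - X)⁻¹ * (1 + X) := by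
    calc (1 + X) * (1 - X)⁻¹ = (1 - X)⁻¹ * ((1 - X) * (1 + X)) * (1 - X)⁻¹ := by
          rw [← Matrix.mul_assoc, nonsing_inv_mul _ hX, Matrix.one_mul]
      _ = (1 - X)⁻¹ * ((1 + X) * (1 - X)) * (1 - X)⁻¹ := by congr 2; noncomm_ring
      _ = (1 - X)⁻¹ * (1 + X) := by
          rw [Matrix.mul_assoc, Matrix.mul_assoc, mul_nonsing_inv _ hX, Matrix.mul_one]
  rw [hcomm, Matrix.mul_assoc, h, ← Matrix.mul_assoc, nonsing_inv_mul _ hX, Matrix.one_mul]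

end

theorem fromBlocks_transpose_eq_neg {n m α : Type*} [AddCommGroup α] {B : Matrix n n α}
    (A : Matrix m n α) (hB : Bᵀ = -B) :
    (fromBlocks B (-Aᵀ) A 0)ᵀ = -fromBlocks B (-Aᵀ) A 0 := by
  rw [fromBlocks_transpose, hB, fromBlocks_neg]
  simp

theorem one_add_submatrix_mul_eq {n n' l R : Type*} [Fintype n] [Fintype n']
    [DecidableEq n] [DecidableEq n'] [CommRing R] (e : n' ≃ n) {X : Matrix n n R}
    {E Q : Matrix n l R} (h : (1 + X) * E = (1 - X) * Q) :
    (1 + X.submatrix e e) * E.submatrix e id = (1 - X.submatrix e e) * Q.submatrix e id := by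
  have hadd : (1 + X).submatrix e e = 1 + X.submatrix e e := by ext i j; simp [one_apply]
  have hsub : (1 - X).submatrix e e = 1 - X.submatrix e e := by ext i j; simp [one_apply]
  rw [← hadd, ← hsub, submatrix_mul_equiv, submatrix_mul_equiv, h]

theorem one_add_fromBlocks_mul_fromRows_eq {k m R : Type*} [Fintype k] [Fintype m]
    [DecidableEq k] [DecidableEq m] [CommRing R] {B Q₁ : Matrix k k R} {A Q₂ : Matrix m k R}
    (htop : 1 + B = (1 - B) * Q₁ + Aᵀ * Q₂) (hbot : A = -A * Q₁ + Q₂) :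
    (1 + fromBlocks B (-Aᵀ) A 0) * fromRows (1 : Matrix k k R) (0 : Matrix m k R)
      = (1 - fromBlocks B (-Aᵀ) A 0) * fromRows Q₁ Q₂ := by
  rw [← fromBlocks_one, sub_eq_add_neg, fromBlocks_neg, fromBlocks_add, fromBlocks_add,
    fromBlocks_mul_fromRows, fromBlocks_mul_fromRows, fromRows_ext_iff]
  constructor
  · simpa [sub_eq_add_neg] using htop
  · simpa [sub_eq_add_neg] using hbot

end Matrix

section CayleyBlocks

variable {k m : Type*} [Fintype k] [DecidableEq k] {Q₁ F : Matrix k k ℝ}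

theorem one_add_mul_one_add_eq_two_smul (hF : F * (1 + Q₁) = 1 - Q₁) :
    (1 + F) * (1 + Q₁) = (2 : ℝ) • 1 := by
  rw [add_mul, one_mul, hF]; module

theorem one_sub_mul_one_add_eq_two_smul (hF : F * (1 + Q₁) = 1 - Q₁) :
    (1 - F) * (1 + Q₁) = (2 : ℝ) • Q₁ := by
  rw [sub_mul, one_mul, hF]; module

theorem one_sub_transpose_mul_eq (hF : F * (1 + Q₁) = 1 - Q₁) (h1 : IsUnit (1 + Q₁)) :
    (1 - Fᵀ) * Q₁ = (1 + Fᵀ) * (Q₁ᵀ * Q₁) := by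
  have h : Q₁ᵀ * (1 - F) = Q₁ᵀ * Q₁ * (1 + F) := by
    rw [← h1.mul_left_inj, Matrix.mul_assoc, Matrix.mul_assoc, one_sub_mul_one_add_eq_two_smul hF,
      one_add_mul_one_add_eq_two_smul hF, Matrix.mul_smul, Matrix.mul_smul, Matrix.mul_one]
  simpa [Matrix.transpose_mul, Matrix.mul_assoc] using congrArg transpose h

theorem half_smul_mul_one_add_eq (Q₂ : Matrix m k ℝ) (hF : F * (1 + Q₁) = 1 - Q₁) :
    (1 / 2 : ℝ) • (Q₂ * (1 + F)) = -((1 / 2 : ℝ) • (Q₂ * (1 + F))) * Q₁ + Q₂ := by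
  have h : (1 / 2 : ℝ) • (Q₂ * (1 + F)) * (1 + Q₁) = Q₂ := by
    rw [smul_mul, Matrix.mul_assoc, one_add_mul_one_add_eq_two_smul hF, Matrix.mul_smul,
      Matrix.mul_one, smul_smul]
    norm_num
  rw [Matrix.mul_add, Matrix.mul_one] at h
  rw [Matrix.neg_mul, neg_add_eq_sub, eq_sub_iff_add_eq, h]

theorem one_add_half_smul_transpose_sub_eq [Fintype m] (Q₂ : Matrix m k ℝ)
    (hF : F * (1 + Q₁) = 1 - Q₁) (h1 : IsUnit (1 + Q₁)) (hO : Q₁ᵀ * Q₁ + Q₂ᵀ * Q₂ = 1) :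
    1 + (1 / 2 : ℝ) • (Fᵀ - F)
      = (1 - (1 / 2 : ℝ) • (Fᵀ - F)) * Q₁ + ((1 / 2 : ℝ) • (Q₂ * (1 + F)))ᵀ * Q₂ := by
  have hFQ : F * Q₁ = 1 - Q₁ - F := by rw [← hF]; noncomm_ring
  have hFtQ : Fᵀ * Q₁ = Q₁ - Q₁ᵀ * Q₁ - Fᵀ * (Q₁ᵀ * Q₁) := by
    calc Fᵀ * Q₁ = Q₁ - (1 - Fᵀ) * Q₁ := by noncomm_ring
      _ = Q₁ - Q₁ᵀ * Q₁ - Fᵀ * (Q₁ᵀ * Q₁) := by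
        rw [one_sub_transpose_mul_eq hF h1]; noncomm_ring
  have hQ₂ : Q₂ᵀ * Q₂ = 1 - Q₁ᵀ * Q₁ := by rw [← hO]; abel
  rw [transpose_smul, transpose_mul, smul_mul, Matrix.mul_assoc, hQ₂]
  simp only [transpose_add, transpose_one, sub_mul, add_mul, mul_sub, smul_mul, one_mul, mul_one,
    hFQ, hFtQ]
  module

end CayleyBlocks

section FinSplit

variable {p k : ℕ} (h : k ≤ p)

def finSplitEquiv : Fin p ≃ Fin k ⊕ Fin (p - k) :=
  (finCongr (by omega)).trans finSumFinEquiv.symm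

theorem blockX_eq_submatrix (B : Matrix (Fin k) (Fin k) ℝ) (A : Matrix (Fin (p - k)) (Fin k) ℝ) :
    blockX h B A = (fromBlocks B (-Aᵀ) A 0).submatrix (finSplitEquiv h) (finSplitEquiv h) :=
  rfl

theorem blockX_transpose {B : Matrix (Fin k) (Fin k) ℝ} (A : Matrix (Fin (p - k)) (Fin k) ℝ)
    (hB : Bᵀ = -B) : (blockX h B A)ᵀ = -blockX h B A := by
  rw [blockX_eq_submatrix, transpose_submatrix, fromBlocks_transpose_eq_neg A hB]
  rfl

theorem submatrix_finSplitEquiv_symm (Q : Matrix (Fin p) (Fin k) ℝ) :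
    Q.submatrix (finSplitEquiv h).symm id = fromRows (topBlock h Q) (botBlock h Q) := by
  ext (a | b) j <;> rfl

theorem fromRows_topBlock_botBlock_submatrix (Q : Matrix (Fin p) (Fin k) ℝ) :
    (fromRows (topBlock h Q) (botBlock h Q)).submatrix (finSplitEquiv h) id = Q := by
  rw [← submatrix_finSplitEquiv_symm, submatrix_submatrix]
  simp

theorem fromRows_one_zero_submatrix :
    (fromRows (1 : Matrix (Fin k) (Fin k) ℝ) 0).submatrix (finSplitEquiv h) id = Ipk p k := by
  have : (Ipk p k).submatrix (finSplitEquiv h).symm id = fromRows 1 0 := by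
    ext (a | b) j
    · simp [Ipk, finSplitEquiv, one_apply, Fin.ext_iff]
    · simp [Ipk, finSplitEquiv]
      omega
  rw [← this, submatrix_submatrix]
  simp

theorem topBlock_transpose_mul_add (Q : Matrix (Fin p) (Fin k) ℝ) :
    (topBlock h Q)ᵀ * topBlock h Q + (botBlock h Q)ᵀ * botBlock h Q = Qᵀ * Q := by
  rw [← fromCols_mul_fromRows, ← transpose_fromRows, ← submatrix_finSplitEquiv_symm,
    transpose_submatrix, submatrix_mul_equiv, submatrix_id_id]

theorem one_add_blockX_mul_Ipk {B : Matrix (Fin k) (Fin k) ℝ} {A : Matrix (Fin (p - k)) (Fin k) ℝ}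
    {Q : Matrix (Fin p) (Fin k) ℝ} (htop : 1 + B = (1 - B) * topBlock h Q + Aᵀ * botBlock h Q)
    (hbot : A = -A * topBlock h Q + botBlock h Q) :
    (1 + blockX h B A) * Ipk p k = (1 - blockX h B A) * Q := by
  rw [blockX_eq_submatrix, ← fromRows_one_zero_submatrix h,
    ← fromRows_topBlock_botBlock_submatrix h Q]
  exact one_add_submatrix_mul_eq _ (one_add_fromBlocks_mul_fromRows_eq htop hbot)

end FinSplit

theorem cayley_surjective_general (p k : ℕ) (hkp : k < p)
    (Q : Matrix (Fin p) (Fin k) ℝ) (hQ : Qᵀ * Q = 1)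
    (h1 : IsUnit (1 + topBlock hkp.le Q)) :
    ((1 / 2 : ℝ) • (((1 - topBlock hkp.le Q) * (1 + topBlock hkp.le Q)⁻¹)ᵀ -
        (1 - topBlock hkp.le Q) * (1 + topBlock hkp.le Q)⁻¹))ᵀ
      = -((1 / 2 : ℝ) • (((1 - topBlock hkp.le Q) * (1 + topBlock hkp.le Q)⁻¹)ᵀ -
        (1 - topBlock hkp.le Q) * (1 + topBlock hkp.le Q)⁻¹)) ∧
    (blockX hkp.le
        ((1 / 2 : ℝ) • (((1 - topBlock hkp.le Q) * (1 + topBlock hkp.le Q)⁻¹)ᵀ -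
          (1 - topBlock hkp.le Q) * (1 + topBlock hkp.le Q)⁻¹))
        ((1 / 2 : ℝ) • (botBlock hkp.le Q *
          (1 + (1 - topBlock hkp.le Q) * (1 + topBlock hkp.le Q)⁻¹))))ᵀ
      = -(blockX hkp.le
        ((1 / 2 : ℝ) • (((1 - topBlock hkp.le Q) * (1 + topBlock hkp.le Q)⁻¹)ᵀ -
          (1 - topBlock hkp.le Q) * (1 + topBlock hkp.le Q)⁻¹))
        ((1 / 2 : ℝ) • (botBlock hkp.le Q *
          (1 + (1 - topBlock hkp.le Q) * (1 + topBlock hkp.le Q)⁻¹)))) ∧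
    cayley p k (blockX hkp.le
        ((1 / 2 : ℝ) • (((1 - topBlock hkp.le Q) * (1 + topBlock hkp.le Q)⁻¹)ᵀ -
          (1 - topBlock hkp.le Q) * (1 + topBlock hkp.le Q)⁻¹))
        ((1 / 2 : ℝ) • (botBlock hkp.le Q *
          (1 + (1 - topBlock hkp.le Q) * (1 + topBlock hkp.le Q)⁻¹))))
      = Q := by
  set Q₁ := topBlock hkp.le Q
  set F := (1 - Q₁) * (1 + Q₁)⁻¹
  have hF : F * (1 + Q₁) = 1 - Q₁ :=
    nonsing_inv_mul_cancel_right _ _ ((isUnit_iff_isUnit_det _).1 h1)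
  have hB : ((1 / 2 : ℝ) • (Fᵀ - F))ᵀ = -((1 / 2 : ℝ) • (Fᵀ - F)) := by
    rw [transpose_smul, transpose_sub, transpose_transpose, ← smul_neg, neg_sub]
  have hX := blockX_transpose hkp.le ((1 / 2 : ℝ) • (botBlock hkp.le Q * (1 + F))) hB
  have hO := (topBlock_transpose_mul_add hkp.le Q).trans hQ
  exact ⟨hB, hX, one_add_mul_nonsing_inv_one_sub_mul_eq (isUnit_det_one_sub_of_transpose_eq_neg hX)
    (one_add_blockX_mul_Ipk hkp.le (one_add_half_smul_transpose_sub_eq _ hF h1 hO)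
      (half_smul_mul_one_add_eq _ hF))⟩

/-- Every orthogonal `p × k` matrix `Q` whose top block `Q₁` satisfies that
`I + Q₁` is invertible lies in the image of the Cayley parametrization: with
`F = (I - Q₁)(I + Q₁)⁻¹`, `B = ½(Fᵀ - F)`, `A = ½ Q₂ (I + F)` and
`X = [[B, -Aᵀ],[A, 0]]`, the matrices `B` and `X` are skew-symmetric and
`C(X) = Q`. -/
theorem cayley_surjective (p k : ℕ) (hk : 0 < k) (hkp : k < p)
    (Q : Matrix (Fin p) (Fin k) ℝ) (hQ : Qᵀ * Q = 1)
    (h1 : IsUnit (1 + topBlock hkp.le Q)) :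
    ((1 / 2 : ℝ) • (((1 - topBlock hkp.le Q) * (1 + topBlock hkp.le Q)⁻¹)ᵀ -
        (1 - topBlock hkp.le Q) * (1 + topBlock hkp.le Q)⁻¹))ᵀ
      = -((1 / 2 : ℝ) • (((1 - topBlock hkp.le Q) * (1 + topBlock hkp.le Q)⁻¹)ᵀ -
        (1 - topBlock hkp.le Q) * (1 + topBlock hkp.le Q)⁻¹)) ∧
    (blockX hkp.le
        ((1 / 2 : ℝ) • (((1 - topBlock hkp.le Q) * (1 + topBlock hkp.le Q)⁻¹)ᵀ -
          (1 - topBlock hkp.le Q) * (1 + topBlock hkp.le Q)⁻¹))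
        ((1 / 2 : ℝ) • (botBlock hkp.le Q *
          (1 + (1 - topBlock hkp.le Q) * (1 + topBlock hkp.le Q)⁻¹))))ᵀ
      = -(blockX hkp.le
        ((1 / 2 : ℝ) • (((1 - topBlock hkp.le Q) * (1 + topBlock hkp.le Q)⁻¹)ᵀ -
          (1 - topBlock hkp.le Q) * (1 + topBlock hkp.le Q)⁻¹))
        ((1 / 2 : ℝ) • (botBlock hkp.le Q *
          (1 + (1 - topBlock hkp.le Q) * (1 + topBlock hkp.le Q)⁻¹)))) ∧
    cayley p k (blockX hkp.le
        ((1 / 2 : ℝ) • (((1 - topBlock hkp.le Q) * (1 + topBlock hkp.le Q)⁻¹)ᵀ -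
          (1 - topBlock hkp.le Q) * (1 + topBlock hkp.le Q)⁻¹))
        ((1 / 2 : ℝ) • (botBlock hkp.le Q *
          (1 + (1 - topBlock hkp.le Q) * (1 + topBlock hkp.le Q)⁻¹))))
      = Q :=
  cayley_surjective_general p k hkp Q hQ h1
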